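/- arXiv:2605.11932 — 7 statements merged into one kernel-verified Lean document; each statement's English description precedes it below -/
import Mathlib

section
/- Let k be an algebraically closed field of characteristic 0 and let φ₄, φ₆, ψ ∈ k[x₁,x₂,x₃] with ψ nonconstant, ψ dividing φ₄ and ψ² dividing φ₆. Then every point (a₁,a₂,a₃,0,0) ∈ k⁵ with ψ(a₁,a₂,a₃) = 0 is a singular point of the associated sextic f = z² + y³ + y·φ₄ + φ₆, and consequently the set of singular points of f is infinite (so the singularities of the corresponding double Veronese cone are not isolated). -/
open MvPolynomial

/-- The associated sextic `f = z² + y³ + y·φ₄ + φ₆` in `k[x₁,x₂,x₃,y,z]`,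
with variables indexed by `Fin 5` (x₁,x₂,x₃ = X 0, X 1, X 2; y = X 3; z = X 4). -/
noncomputable def sextic {k : Type*} [CommRing k] (φ₄ φ₆ : MvPolynomial (Fin 3) k) :
    MvPolynomial (Fin 5) k :=
  X 4 ^ 2 + X 3 ^ 3 + X 3 * rename (Fin.castLE (by norm_num)) φ₄ +
    rename (Fin.castLE (by norm_num)) φ₆

/-- `P` is a singular point of `f`: `f` and all its partial derivatives vanish at `P`. -/
def IsSingularPt {k : Type*} [CommRing k] (f : MvPolynomial (Fin 5) k) (P : Fin 5 → k) : Prop :=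
  eval P f = 0 ∧ ∀ i : Fin 5, eval P (pderiv i f) = 0

/-! At a zero `a` of `ψ`, the point `(a, 0, 0)` kills `z²`, `y³` and `y·φ₄` together with their
first derivatives except `∂_y (y·φ₄) = φ₄`, which vanishes since `ψ ∣ φ₄`; and `φ₆` vanishes to
order two there since `ψ² ∣ φ₆`. Infinitely many such points exist because a nonconstant polynomial
in at least two variables over an algebraically closed field has infinitely many zeros: solve for a
variable in which it has positive degree, at the infinitely many values of the other variables
where its leading coefficient does not vanish. -/

namespace MvPolynomial

section Field

variable {σ k : Type*} [Field k]

theorem X_sub_C_ne_zero (i : σ) (c : k) : (X i - C c : MvPolynomial σ k) ≠ 0 := by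
  intro h
  simpa using congrArg (eval fun _ => c + 1) h

theorem infinite_setOf_eval_ne_zero [Infinite k] [Nonempty σ] {g : MvPolynomial σ k}
    (hg : g ≠ 0) : {x : σ → k | eval x g ≠ 0}.Infinite := by
  intro hS
  let i : σ := Classical.arbitrary σ
  -- `g` times a polynomial vanishing on the finite set where `g` does not vanish is zero everywhere
  let p := g * ∏ b ∈ hS.toFinset, (X i - C (b i))
  have h_eval : ∀ x, eval x p = eval x 0 := by
    intro x
    by_cases hx : eval x g = 0
    · simp [p, hx]
    · simp only [p, map_mul, map_prod, map_sub, eval_X, eval_C, map_zero]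
      exact mul_eq_zero_of_right _ (Finset.prod_eq_zero (hS.mem_toFinset.2 hx) (sub_self _))
  have hp : p ≠ 0 :=
    mul_ne_zero hg (Finset.prod_ne_zero_iff.2 fun b _ => X_sub_C_ne_zero i (b i))
  exact hp (MvPolynomial.funext h_eval)

variable [IsAlgClosed k]

theorem infinite_setOf_eval_eq_zero_of_degreeOf_none_ne_zero [Nonempty σ]
    {p : MvPolynomial (Option σ) k} (hp : p.degreeOf none ≠ 0) :
    {x : Option σ → k | eval x p = 0}.Infinite := by
  set q := optionEquivLeft k σ p
  have hq_deg : q.natDegree ≠ 0 := by rwa [natDegree_optionEquivLeft]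
  have hq : q ≠ 0 := by rintro h; simp [h] at hq_deg
  refine Set.Infinite.of_image (fun x => x ∘ some) <|
    (infinite_setOf_eval_ne_zero (Polynomial.leadingCoeff_ne_zero.2 hq)).mono ?_
  intro b hb
  have hdeg : (q.map (eval b)).natDegree ≠ 0 := by
    rwa [Polynomial.natDegree_map_of_leadingCoeff_ne_zero _ hb]
  obtain ⟨y, hy⟩ := IsAlgClosed.exists_root _ (Polynomial.degree_ne_of_natDegree_ne hdeg)
  exact ⟨fun x => x.elim y b, by simpa [optionEquivLeft_elim_eval] using hy, rfl⟩

theorem infinite_setOf_eval_eq_zero [Nontrivial σ] {ψ : MvPolynomial σ k}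
    (hψ : ∀ c, ψ ≠ C c) : {x : σ → k | eval x ψ = 0}.Infinite := by
  classical
  obtain ⟨i, hi⟩ : ψ.vars.Nonempty :=
    Finset.nonempty_iff_ne_empty.2 fun h => hψ _ (vars_eq_empty_iff_eq_C.1 h)
  obtain ⟨j, hj⟩ := exists_ne i
  have : Nonempty {j // j ≠ i} := ⟨⟨j, hj⟩⟩
  let e := (Equiv.optionSubtypeNe i).symm
  have hdeg : (rename e ψ).degreeOf none ≠ 0 := by
    rwa [← Equiv.optionSubtypeNe_symm_self i, degreeOf_rename_of_injective e.injective,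
      ← mem_vars_iff_degreeOf_ne_zero]
  refine ((infinite_setOf_eval_eq_zero_of_degreeOf_none_ne_zero hdeg).image
    (e.surjective.injective_comp_right.injOn)).mono ?_
  rintro _ ⟨x, hx, rfl⟩
  simpa [eval_rename] using hx

end Field

variable {σ τ R : Type*} [CommRing R]

theorem eval_eq_zero_of_dvd {ψ φ : MvPolynomial σ R} (h : ψ ∣ φ) {a : σ → R}
    (ha : eval a ψ = 0) : eval a φ = 0 := by
  obtain ⟨q, rfl⟩ := h
  simp [ha]

theorem eval_pderiv_eq_zero_of_sq_dvd {ψ φ : MvPolynomial σ R} (h : ψ ^ 2 ∣ φ) {a : σ → R}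
    (ha : eval a ψ = 0) (i : σ) : eval a (pderiv i φ) = 0 := by
  obtain ⟨q, rfl⟩ := h
  simp [Derivation.leibniz, Derivation.leibniz_pow, ha]

theorem eval_pderiv_rename_eq_zero {f : σ → τ} (hf : Function.Injective f) {P : τ → R}
    {φ : MvPolynomial σ R} (h : ∀ i, eval (P ∘ f) (pderiv i φ) = 0) (j : τ) :
    eval P (pderiv j (rename f φ)) = 0 := by
  by_cases hj : j ∈ Set.range f
  · obtain ⟨i, rfl⟩ := hj
    rw [pderiv_rename hf, eval_rename, h]
  · have hj' : j ∉ (rename f φ).vars := fun hmem =>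
      hj ((mem_vars_rename f φ hmem).imp fun _ => And.right)
    rw [pderiv_eq_zero_of_notMem_vars hj', map_zero]

end MvPolynomial

theorem comp_castLE_eq {R : Type*} [Zero R] (a : Fin 3 → R) (h : 3 ≤ 5) :
    (![a 0, a 1, a 2, 0, 0] : Fin 5 → R) ∘ Fin.castLE h = a := by
  funext j; fin_cases j <;> rfl

theorem isSingularPt_sextic {k : Type*} [CommRing k] {φ₄ φ₆ : MvPolynomial (Fin 3) k}
    {a : Fin 3 → k} (h₄ : eval a φ₄ = 0) (h₆ : eval a φ₆ = 0)
    (h₆' : ∀ i, eval a (pderiv i φ₆) = 0) :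
    IsSingularPt (sextic φ₄ φ₆) ![a 0, a 1, a 2, 0, 0] := by
  constructor
  · simp [sextic, eval_rename, comp_castLE_eq, h₄, h₆]
  · intro j
    have h₆'' := eval_pderiv_rename_eq_zero (Fin.castLE_injective (show 3 ≤ 5 by norm_num))
      (P := ![a 0, a 1, a 2, 0, 0]) (by rwa [comp_castLE_eq]) j
    simp [sextic, Derivation.leibniz, Derivation.leibniz_pow, eval_rename, comp_castLE_eq, h₄, h₆'']

theorem stmt_0_general {k : Type*} [Field k] [IsAlgClosed k]
    (φ₄ φ₆ ψ : MvPolynomial (Fin 3) k)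
    (hψ : ∀ c : k, ψ ≠ C c)
    (hdvd4 : ψ ∣ φ₄) (hdvd6 : ψ ^ 2 ∣ φ₆) :
    (∀ a : Fin 3 → k, eval a ψ = 0 →
      IsSingularPt (sextic φ₄ φ₆) ![a 0, a 1, a 2, 0, 0]) ∧
    {P : Fin 5 → k | IsSingularPt (sextic φ₄ φ₆) P}.Infinite := by
  have hsing (a : Fin 3 → k) (ha : eval a ψ = 0) :
      IsSingularPt (sextic φ₄ φ₆) ![a 0, a 1, a 2, 0, 0] :=
    isSingularPt_sextic (eval_eq_zero_of_dvd hdvd4 ha)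
      (eval_eq_zero_of_dvd ((dvd_pow_self ψ two_ne_zero).trans hdvd6) ha)
      (eval_pderiv_eq_zero_of_sq_dvd hdvd6 ha)
  have hinj : Function.Injective fun a : Fin 3 → k => (![a 0, a 1, a 2, 0, 0] : Fin 5 → k) :=
    fun a b hab => by
      rw [← comp_castLE_eq a (by norm_num), ← comp_castLE_eq b (by norm_num)]
      exact congrArg (· ∘ _) hab
  refine ⟨hsing, ((infinite_setOf_eval_eq_zero hψ).image hinj.injOn).mono ?_⟩
  rintro _ ⟨a, ha, rfl⟩
  exact hsing a ha

/-- If `ψ` is nonconstant, `ψ ∣ φ₄` and `ψ² ∣ φ₆`, then every point `(a₁,a₂,a₃,0,0)`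
with `ψ(a) = 0` is singular on the sextic, and the set of singular points is infinite. -/
theorem stmt_0 {k : Type*} [Field k] [IsAlgClosed k] [CharZero k]
    (φ₄ φ₆ ψ : MvPolynomial (Fin 3) k)
    (hψ : ∀ c : k, ψ ≠ C c)
    (hdvd4 : ψ ∣ φ₄) (hdvd6 : ψ ^ 2 ∣ φ₆) :
    (∀ a : Fin 3 → k, eval a ψ = 0 →
      IsSingularPt (sextic φ₄ φ₆) ![a 0, a 1, a 2, 0, 0]) ∧
    {P : Fin 5 → k | IsSingularPt (sextic φ₄ φ₆) P}.Infinite :=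
  stmt_0_general φ₄ φ₆ ψ hψ hdvd4 hdvd6
end

section
/- Let k be a field of characteristic 0, let φ₄ ∈ k[x₁,x₂,x₃] be homogeneous of degree 4 (possibly zero), let φ₆ ∈ k[x₁,x₂,x₃] be homogeneous of degree 6, and set D := 4φ₄³ + 27φ₆². Let a ∈ k³ be a point with φ₆(a) ≠ 0. Then the following are equivalent: (i) there exists b ∈ k such that (a₁,a₂,a₃,b,0) is a singular point of the associated sextic f = z² + y³ + y·φ₄ + φ₆; (ii) ∂D/∂xᵢ(a) = 0 for i = 1,2,3. Moreover, in this case D(a) = 0, and the unique such b equals 2φ₄(a)²/(9φ₆(a)). (This identifies the singular points of the double Veronese cone lying outside Λ₆ = {φ₆ = 0} with the singular points of the discriminant curve 𝔇 = {D = 0} outside Λ₆.) -/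
open MvPolynomial

/-!
At `(a, b, 0)` the sextic is singular iff `b` is a double root of `t³ + φ₄(a) t + φ₆(a)` and
`b ∇φ₄(a) + ∇φ₆(a) = 0`. When `φ₆(a) ≠ 0`, such a double root exists iff the discriminant
`D(a)` vanishes, and it is then `b₀ = 2φ₄(a)²/(9φ₆(a))`. Since `9φ₆(a) b₀ = 2φ₄(a)²`, the chain
rule gives `∇D(a) = 54 φ₆(a) (b₀ ∇φ₄(a) + ∇φ₆(a))`; finally `∇D(a) = 0` forces `D(a) = 0` by
Euler's identity, `D` being homogeneous of degree 12.
-/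

namespace MvPolynomial

variable {R σ τ : Type*} [CommSemiring R]

theorem pderiv_rename_eq_zero {f : σ → τ} {i : τ} (hi : i ∉ Set.range f)
    (p : MvPolynomial σ R) : pderiv i (rename f p) = 0 := by
  classical
  refine pderiv_eq_zero_of_notMem_vars fun hmem => hi ?_
  obtain ⟨j, -, rfl⟩ := Finset.mem_image.mp (vars_rename f p hmem)
  exact ⟨j, rfl⟩

theorem IsHomogeneous.eval_eq_zero_of_eval_pderiv_eq_zero [Fintype σ] [NoZeroDivisors R]
    {p : MvPolynomial σ R} {n : ℕ} (hp : p.IsHomogeneous n) (hn : (n : R) ≠ 0) {a : σ → R}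
    (ha : ∀ i, eval a (pderiv i p) = 0) : eval a p = 0 := by
  have euler := congrArg (eval a) hp.sum_X_mul_pderiv
  simp only [map_sum, map_mul, ha, mul_zero, Finset.sum_const_zero, map_nsmul] at euler
  rw [nsmul_eq_mul] at euler
  exact (mul_eq_zero.mp euler.symm).resolve_left hn

theorem IsHomogeneous.discr {p q : MvPolynomial σ R} (hp : p.IsHomogeneous 4)
    (hq : q.IsHomogeneous 6) : (4 * p ^ 3 + 27 * q ^ 2).IsHomogeneous 12 := by
  rw [← map_ofNat C 4, ← map_ofNat C 27]
  exact ((hp.pow 3).C_mul _).add ((hq.pow 2).C_mul _)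

theorem pderiv_discr (i : σ) (p q : MvPolynomial σ R) :
    pderiv i (4 * p ^ 3 + 27 * q ^ 2) = 12 * p ^ 2 * pderiv i p + 54 * q * pderiv i q := by
  rw [← map_ofNat C 4, ← map_ofNat C 27, map_add, pderiv_C_mul, pderiv_C_mul, pderiv_pow, pderiv_pow, map_ofNat, map_ofNat]
  push_cast
  ring

end MvPolynomial

section Cubic

theorem cubic_double_root_iff {R : Type*} [CommRing R] {p q b : R} :
    b ^ 3 + b * p + q = 0 ∧ 3 * b ^ 2 + p = 0 ↔ p = -3 * b ^ 2 ∧ q = 2 * b ^ 3 := by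
  constructor
  · rintro ⟨hf, hf'⟩
    exact ⟨by linear_combination hf', by linear_combination hf - b * hf'⟩
  · rintro ⟨rfl, rfl⟩
    constructor <;> ring

variable {K : Type*} [Field K] {p q b : K}

theorem double_root_iff_discr_eq_zero (h3 : (3 : K) ≠ 0) (hq : q ≠ 0) :
    p = -3 * b ^ 2 ∧ q = 2 * b ^ 3 ↔ 4 * p ^ 3 + 27 * q ^ 2 = 0 ∧ b = 2 * p ^ 2 / (9 * q) := by
  have h9 : (9 : K) ≠ 0 := by simpa [show (9 : K) = 3 ^ 2 by norm_num]
  constructor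
  · rintro ⟨rfl, rfl⟩
    refine ⟨by ring, ?_⟩
    rw [eq_div_iff (mul_ne_zero h9 hq)]
    ring
  · rintro ⟨hD, rfl⟩
    constructor
    · field_simp
      linear_combination 3 * p * hD
    · field_simp
      linear_combination (27 * q ^ 2 - 4 * p ^ 3) * hD

theorem discr_deriv_factor (h3 : (3 : K) ≠ 0) (hq : q ≠ 0) (dp dq : K) :
    12 * p ^ 2 * dp + 54 * q * dq = 54 * q * (2 * p ^ 2 / (9 * q) * dp + dq) := by
  have h9 : (9 : K) ≠ 0 := by simpa [show (9 : K) = 3 ^ 2 by norm_num]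
  field_simp
  ring

end Cubic

section Sextic

variable {R : Type*} [CommRing R] (φ₄ φ₆ : MvPolynomial (Fin 3) R) (a : Fin 3 → R) (b : R)

theorem eval_rename_castLE (h : 3 ≤ 5) (φ : MvPolynomial (Fin 3) R) (c : R) :
    eval ![a 0, a 1, a 2, b, c] (rename (Fin.castLE h) φ) = eval a φ := by
  rw [eval_rename, show ![a 0, a 1, a 2, b, c] ∘ Fin.castLE h = a by ext i; fin_cases i <;> rfl]

theorem pderiv_rename_castLE_of_le (h : 3 ≤ 5) {i : Fin 5} (hi : 3 ≤ (i : ℕ))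
    (φ : MvPolynomial (Fin 3) R) : pderiv i (rename (Fin.castLE h) φ) = 0 := by
  refine pderiv_rename_eq_zero ?_ φ
  rintro ⟨j, rfl⟩
  exact absurd hi (by simp)

theorem eval_sextic :
    eval ![a 0, a 1, a 2, b, 0] (sextic φ₄ φ₆) = b ^ 3 + b * eval a φ₄ + eval a φ₆ := by
  simp [sextic, eval_rename_castLE]

theorem eval_pderiv_y_sextic :
    eval ![a 0, a 1, a 2, b, 0] (pderiv 3 (sextic φ₄ φ₆)) = 3 * b ^ 2 + eval a φ₄ := by
  simp [sextic, pderiv_rename_castLE_of_le, eval_rename_castLE]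

theorem eval_pderiv_z_sextic :
    eval ![a 0, a 1, a 2, b, 0] (pderiv 4 (sextic φ₄ φ₆)) = 0 := by
  simp [sextic, pderiv_rename_castLE_of_le]

theorem eval_pderiv_x_sextic (h : 3 ≤ 5) (j : Fin 3) :
    eval ![a 0, a 1, a 2, b, 0] (pderiv (Fin.castLE h j) (sextic φ₄ φ₆)) =
      b * eval a (pderiv j φ₄) + eval a (pderiv j φ₆) := by
  have hy : (3 : Fin 5) ≠ Fin.castLE h j := by simp [Fin.ext_iff]; omega
  have hz : (4 : Fin 5) ≠ Fin.castLE h j := by simp [Fin.ext_iff]; omega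
  simp [sextic, pderiv_X_of_ne hy, pderiv_X_of_ne hz,
    pderiv_rename (Fin.castLE_injective h), eval_rename_castLE]

theorem isSingularPt_sextic_iff :
    IsSingularPt (sextic φ₄ φ₆) ![a 0, a 1, a 2, b, 0] ↔
      (b ^ 3 + b * eval a φ₄ + eval a φ₆ = 0 ∧ 3 * b ^ 2 + eval a φ₄ = 0) ∧
        ∀ j, b * eval a (pderiv j φ₄) + eval a (pderiv j φ₆) = 0 := by
  have hle : 3 ≤ 5 := by norm_num
  constructor
  · rintro ⟨hf, hdf⟩
    refine ⟨⟨(eval_sextic ..).symm.trans hf, (eval_pderiv_y_sextic ..).symm.trans (hdf 3)⟩,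
      fun j => ?_⟩
    rw [← eval_pderiv_x_sextic φ₄ φ₆ a b hle]
    exact hdf _
  · rintro ⟨⟨hf, hy⟩, hx⟩
    refine ⟨(eval_sextic ..).trans hf, fun i => ?_⟩
    fin_cases i
    · exact (eval_pderiv_x_sextic φ₄ φ₆ a b hle 0).trans (hx 0)
    · exact (eval_pderiv_x_sextic φ₄ φ₆ a b hle 1).trans (hx 1)
    · exact (eval_pderiv_x_sextic φ₄ φ₆ a b hle 2).trans (hx 2)
    · exact (eval_pderiv_y_sextic ..).trans hy
    · exact eval_pderiv_z_sextic ..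

end Sextic

/-- Outside `Λ₆ = {φ₆ = 0}`, singular points of the sextic correspond exactly to
singular points of the discriminant `D = 4φ₄³ + 27φ₆²`; at such a point `D(a) = 0`
and the `y`-coordinate equals `2φ₄(a)²/(9φ₆(a))`. -/
theorem stmt_2 {k : Type*} [Field k] [CharZero k]
    (φ₄ φ₆ : MvPolynomial (Fin 3) k)
    (h4 : φ₄.IsHomogeneous 4) (h6 : φ₆.IsHomogeneous 6)
    (a : Fin 3 → k) (ha : eval a φ₆ ≠ 0) :
    ((∃ b : k, IsSingularPt (sextic φ₄ φ₆) ![a 0, a 1, a 2, b, 0]) ↔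
      ∀ i : Fin 3, eval a (pderiv i (4 * φ₄ ^ 3 + 27 * φ₆ ^ 2)) = 0) ∧
    ((∃ b : k, IsSingularPt (sextic φ₄ φ₆) ![a 0, a 1, a 2, b, 0]) →
      eval a (4 * φ₄ ^ 3 + 27 * φ₆ ^ 2) = 0 ∧
      ∀ b : k, IsSingularPt (sextic φ₄ φ₆) ![a 0, a 1, a 2, b, 0] →
        b = 2 * (eval a φ₄) ^ 2 / (9 * eval a φ₆)) := by
  set b₀ := 2 * (eval a φ₄) ^ 2 / (9 * eval a φ₆)
  have hsing (b : k) : IsSingularPt (sextic φ₄ φ₆) ![a 0, a 1, a 2, b, 0] ↔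
      (eval a (4 * φ₄ ^ 3 + 27 * φ₆ ^ 2) = 0 ∧ b = b₀) ∧
        ∀ j, b * eval a (pderiv j φ₄) + eval a (pderiv j φ₆) = 0 := by
    rw [isSingularPt_sextic_iff, cubic_double_root_iff,
      double_root_iff_discr_eq_zero three_ne_zero ha]
    simp only [map_add, map_mul, map_pow, map_ofNat, b₀]
  have hgrad (j : Fin 3) : eval a (pderiv j (4 * φ₄ ^ 3 + 27 * φ₆ ^ 2)) =
      54 * eval a φ₆ * (b₀ * eval a (pderiv j φ₄) + eval a (pderiv j φ₆)) := by
    rw [pderiv_discr, ← discr_deriv_factor three_ne_zero ha]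
    simp only [map_add, map_mul, map_pow, map_ofNat]
  refine ⟨⟨?_, fun hD => ⟨b₀, (hsing b₀).2 ⟨⟨?_, rfl⟩, fun j => ?_⟩⟩⟩, ?_⟩
  · rintro ⟨b, hb⟩ j
    obtain ⟨⟨-, rfl⟩, hx⟩ := (hsing b).1 hb
    rw [hgrad, hx, mul_zero]
  · exact (h4.discr h6).eval_eq_zero_of_eval_pderiv_eq_zero (by norm_num) hD
  · have h54 : 54 * eval a φ₆ ≠ 0 := mul_ne_zero (by norm_num) ha
    exact (mul_eq_zero.mp ((hgrad j).symm.trans (hD j))).resolve_left h54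
  · rintro ⟨b, hb⟩
    exact ⟨((hsing b).1 hb).1.1, fun b' hb' => ((hsing b').1 hb').1.2⟩
end

section
/- Let k be a field of characteristic 0 and let Φ, Ψ ∈ k[x₁,x₂] satisfy Φ(0,0) = 0, Ψ(0,0) = 0, and ∂Ψ/∂x₁(0,0) = ∂Ψ/∂x₂(0,0) = 0. Set F := z² + y³ + y·Φ + Ψ ∈ k[x₁,x₂,y,z], let lᵢ := ∂Φ/∂xᵢ(0,0) and qᵢⱼ := ∂²Ψ/∂xᵢ∂xⱼ(0,0). Then the origin is a critical point of F (F and all four partial derivatives of F vanish at 0), and the 4×4 matrix of second partial derivatives of F at the origin is nonsingular if and only if q₂₂·l₁² − 2q₁₂·l₁·l₂ + q₁₁·l₂² ≠ 0. (This is the criterion for a singular point of a double Veronese cone to be a node, an ordinary double point, in terms of the local equation z² + y³ + y·Φ + Ψ.) -/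
/-!
The gradient of `F = z² + y³ + y·Φ + Ψ` is `(∂Ψ + y·∂Φ, 3y² + Φ, 2z)`, which vanishes at the
origin by the hypotheses on `Φ` and `Ψ`. Since `y³` contributes nothing to second order, the
Hessian at the origin is the bordered matrix `[[q, l, 0], [lᵀ, 0, 0], [0, 0, 2]]`, whose
determinant is `-2 · (q₂₂ l₁² - 2 q₁₂ l₁ l₂ + q₁₁ l₂²)`; in characteristic zero the factor `2`
is harmless.
-/

open MvPolynomial

namespace MvPolynomial

variable {R σ τ : Type*} [CommRing R]

theorem pderiv_pderiv_comm (i j : σ) (p : MvPolynomial σ R) :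
    pderiv i (pderiv j p) = pderiv j (pderiv i p) := by
  classical
  induction p using MvPolynomial.induction_on' with
  | add p q hp hq => simp only [map_add, hp, hq]
  | monomial s a =>
    rcases eq_or_ne i j with rfl | hij
    · rfl
    · simp only [pderiv_monomial, Finsupp.tsub_apply, Finsupp.single_apply, if_neg hij,
        if_neg hij.symm, tsub_zero]
      rw [tsub_right_comm, mul_right_comm]

theorem pderiv_rename_of_notMem_range {f : σ → τ} {j : τ} (hj : j ∉ Set.range f)
    (p : MvPolynomial σ R) : pderiv j (rename f p) = 0 := by
  classical
  refine pderiv_eq_zero_of_notMem_vars fun hv => hj ?_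
  obtain ⟨i, -, rfl⟩ := Finset.mem_image.mp (vars_rename f p hv)
  exact ⟨i, rfl⟩

theorem pderiv_rename_castLE {m n : ℕ} (h : m ≤ n) (j : Fin n) (p : MvPolynomial (Fin m) R) :
    pderiv j (rename (Fin.castLE h) p) =
      if hj : (j : ℕ) < m then rename (Fin.castLE h) (pderiv ⟨j, hj⟩ p) else 0 := by
  split_ifs with hj
  · exact pderiv_rename (Fin.castLE_injective h) ⟨j, hj⟩ p
  · exact pderiv_rename_of_notMem_range (by simpa [Fin.range_castLE] using hj) p

def IsCriticalPoint (p : MvPolynomial σ R) (x : σ → R) : Prop :=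
  eval x p = 0 ∧ ∀ i, eval x (pderiv i p) = 0

noncomputable def hessianAt (x : σ → R) (p : MvPolynomial σ R) : Matrix σ σ R :=
  Matrix.of fun i j => eval x (pderiv i (pderiv j p))

end MvPolynomial

theorem Matrix.det_bordered_fin_four {R : Type*} [CommRing R] (a b c d e t : R) :
    !![a, b, c, 0; b, d, e, 0; c, e, 0, 0; 0, 0, 0, t].det =
      -t * (d * c ^ 2 - 2 * b * c * e + a * e ^ 2) := by
  simp [Matrix.det_succ_row_zero, Fin.sum_univ_succ, Fin.succAbove]
  ring

section DoubleVeroneseCone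

variable {k : Type*} [CommRing k] (Φ Ψ : MvPolynomial (Fin 2) k)

local notation "ι" => (Fin.castLE (show 2 ≤ 4 by norm_num) : Fin 2 → Fin 4)

noncomputable def doubleVeroneseConeEquation : MvPolynomial (Fin 4) k :=
  X 3 ^ 2 + X 2 ^ 3 + X 2 * rename ι Φ + rename ι Ψ

theorem pderiv_doubleVeroneseConeEquation (j : Fin 4) :
    pderiv j (doubleVeroneseConeEquation Φ Ψ) =
      ![X 2 * rename ι (pderiv 0 Φ) + rename ι (pderiv 0 Ψ),
        X 2 * rename ι (pderiv 1 Φ) + rename ι (pderiv 1 Ψ),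
        3 * X 2 ^ 2 + rename ι Φ,
        2 * X 3] j := by
  fin_cases j <;> simp [doubleVeroneseConeEquation, pderiv_rename_castLE, pderiv_X]

variable {Φ Ψ} in
theorem isCriticalPoint_doubleVeroneseConeEquation (hΦ : eval 0 Φ = 0) (hΨ : eval 0 Ψ = 0)
    (hΨ' : ∀ i, eval 0 (pderiv i Ψ) = 0) :
    IsCriticalPoint (doubleVeroneseConeEquation Φ Ψ) 0 := by
  simp only [eval_zero] at hΦ hΨ hΨ'
  refine ⟨by simp [doubleVeroneseConeEquation, hΦ, hΨ], fun j => ?_⟩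
  fin_cases j <;> simp [pderiv_doubleVeroneseConeEquation, hΦ, hΨ']

theorem hessianAt_zero_doubleVeroneseConeEquation :
    hessianAt 0 (doubleVeroneseConeEquation Φ Ψ) =
      !![hessianAt 0 Ψ 0 0, hessianAt 0 Ψ 0 1, eval 0 (pderiv 0 Φ), 0;
        hessianAt 0 Ψ 0 1, hessianAt 0 Ψ 1 1, eval 0 (pderiv 1 Φ), 0;
        eval 0 (pderiv 0 Φ), eval 0 (pderiv 1 Φ), 0, 0;
        0, 0, 0, 2] := by
  ext i j
  fin_cases i <;> fin_cases j <;>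
    simp [hessianAt, pderiv_doubleVeroneseConeEquation, pderiv_rename_castLE, pderiv_X,
      pderiv_pderiv_comm (1 : Fin 2) 0 Ψ, map_ofNat]

end DoubleVeroneseCone

/-- Nodality criterion for a singular point of a double Veronese cone in terms of the local
equation `F = z² + y³ + y·Φ + Ψ` (variables: x₁ = X 0, x₂ = X 1, y = X 2, z = X 3). -/
theorem stmt_4 {k : Type*} [Field k] [CharZero k]
    (Φ Ψ : MvPolynomial (Fin 2) k)
    (hΦ : eval (0 : Fin 2 → k) Φ = 0) (hΨ : eval (0 : Fin 2 → k) Ψ = 0)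
    (hΨ₁ : eval (0 : Fin 2 → k) (pderiv 0 Ψ) = 0)
    (hΨ₂ : eval (0 : Fin 2 → k) (pderiv 1 Ψ) = 0) :
    let F : MvPolynomial (Fin 4) k :=
      X 3 ^ 2 + X 2 ^ 3 + X 2 * rename (Fin.castLE (by norm_num)) Φ +
        rename (Fin.castLE (by norm_num)) Ψ
    let l : Fin 2 → k := fun i => eval (0 : Fin 2 → k) (pderiv i Φ)
    let q : Fin 2 → Fin 2 → k := fun i j => eval (0 : Fin 2 → k) (pderiv i (pderiv j Ψ))
    (eval (0 : Fin 4 → k) F = 0 ∧ ∀ i : Fin 4, eval (0 : Fin 4 → k) (pderiv i F) = 0) ∧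
    ((Matrix.of fun i j : Fin 4 => eval (0 : Fin 4 → k) (pderiv i (pderiv j F))).det ≠ 0 ↔
      q 1 1 * l 0 ^ 2 - 2 * q 0 1 * l 0 * l 1 + q 0 0 * l 1 ^ 2 ≠ 0) := by
  intro F l q
  refine ⟨isCriticalPoint_doubleVeroneseConeEquation hΦ hΨ
    (Fin.forall_fin_two.mpr ⟨hΨ₁, hΨ₂⟩), ?_⟩
  change (hessianAt 0 (doubleVeroneseConeEquation Φ Ψ)).det ≠ 0 ↔ _
  rw [hessianAt_zero_doubleVeroneseConeEquation, Matrix.det_bordered_fin_four, neg_mul,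
    neg_ne_zero, mul_ne_zero_iff, and_iff_right two_ne_zero]
  rfl
end

section
/- Let k be a field of characteristic 0. For t ∈ k define σ_t : k⁵ → k⁵ by σ_t(x₁,x₂,x₃,y,z) = (x₁ + t·x₂ + (t²/2)·x₃, x₂ + t·x₃, x₃, y, z). Then: (1) σ₀ = id and σ_s ∘ σ_t = σ_{s+t} for all s,t ∈ k, so σ is an action of the additive group 𝔾ₐ on k⁵; (2) for every λ ∈ k the quadratic form ψ_λ := x₂² − 2x₁x₃ + λx₃² satisfies ψ_λ(σ_t(v)) = ψ_λ(v) for all v ∈ k⁵ and t ∈ k, and likewise ψ_∞ := x₃² is invariant; (3) consequently, for any ε ∈ k and any q₁, q₂, q₃, q₄, q₅ each of which is one of the forms ψ_λ (λ ∈ k) or x₃², the polynomial f = z² + y³ + ε·y·q₁·q₂ + q₃·q₄·q₅ satisfies f(σ_t(v)) = f(v) for all v and t, so the zero set {f = 0} ⊂ k⁵ is invariant and the double Veronese cone given by f admits an effective 𝔾ₐ-action. -/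
/-- The additive group action `σ_t` on `k⁵`, the invariance of the pencil of quadratic forms
`ψ_λ = x₂² − 2x₁x₃ + λx₃²` and `ψ_∞ = x₃²`, and the consequent `𝔾ₐ`-invariance of the
double Veronese cones `z² + y³ + ε·y·q₁·q₂ + q₃·q₄·q₅ = 0`. -/
theorem stmt_6 {k : Type*} [Field k] [CharZero k] :
    let σ : k → (Fin 5 → k) → (Fin 5 → k) := fun t v =>
      ![v 0 + t * v 1 + (t ^ 2 / 2) * v 2, v 1 + t * v 2, v 2, v 3, v 4]
    let ψ : k → (Fin 5 → k) → k := fun lam v =>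
      (v 1) ^ 2 - 2 * v 0 * v 2 + lam * (v 2) ^ 2
    let ψinf : (Fin 5 → k) → k := fun v => (v 2) ^ 2
    -- (1) σ is an action of 𝔾ₐ on k⁵
    (σ 0 = id ∧ ∀ s t : k, σ s ∘ σ t = σ (s + t)) ∧
    -- (2) the forms ψ_λ and ψ_∞ are invariant
    (∀ (lam t : k) (v : Fin 5 → k), ψ lam (σ t v) = ψ lam v) ∧
    (∀ (t : k) (v : Fin 5 → k), ψinf (σ t v) = ψinf v) ∧
    -- (3) the sextic built from such forms is invariant, hence its zero set is invariant
    (∀ (ε : k) (q : Fin 5 → ((Fin 5 → k) → k)),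
      (∀ i : Fin 5, (∃ lam : k, q i = ψ lam) ∨ q i = ψinf) →
      let f : (Fin 5 → k) → k := fun v =>
        (v 4) ^ 2 + (v 3) ^ 3 + ε * v 3 * q 0 v * q 1 v + q 2 v * q 3 v * q 4 v
      (∀ (t : k) (v : Fin 5 → k), f (σ t v) = f v) ∧
      (∀ t : k, σ t '' {v | f v = 0} = {v | f v = 0})) := by
  intro σ ψ ψinf
  have hψ : ∀ (lam t : k) (v : Fin 5 → k), ψ lam (σ t v) = ψ lam v := by
    intro lam t v
    simp only [σ, ψ, Matrix.cons_val_zero, Matrix.cons_val_one, Matrix.head_cons,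
      Matrix.cons_val_two, Matrix.tail_cons]
    ring
  have hψinf : ∀ (t : k) (v : Fin 5 → k), ψinf (σ t v) = ψinf v := by
    intro t v
    simp [σ, ψinf]
  have hq : ∀ (g : (Fin 5 → k) → k), ((∃ lam : k, g = ψ lam) ∨ g = ψinf) →
      ∀ (t : k) (v : Fin 5 → k), g (σ t v) = g v := by
    rintro g (⟨lam, rfl⟩ | rfl) t v
    · exact hψ lam t v
    · exact hψinf t v
  refine ⟨⟨?_, ?_⟩, hψ, hψinf, ?_⟩
  · funext v
    ext i
    fin_cases i <;> simp [σ]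
  · intro s t
    funext v
    ext i
    fin_cases i <;>
      simp [σ, Matrix.cons_val_zero, Matrix.cons_val_one, Matrix.head_cons] <;> ring
  · intro ε q hqall f
    have hf : ∀ (t : k) (v : Fin 5 → k), f (σ t v) = f v := by
      intro t v
      have h3 : (σ t v) 3 = v 3 := by simp [σ]
      have h4 : (σ t v) 4 = v 4 := by simp [σ]
      simp only [f, h3, h4, hq (q 0) (hqall 0) t v, hq (q 1) (hqall 1) t v,
        hq (q 2) (hqall 2) t v, hq (q 3) (hqall 3) t v, hq (q 4) (hqall 4) t v]
    refine ⟨hf, ?_⟩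
    intro t
    ext v
    simp only [Set.mem_image, Set.mem_setOf_eq]
    constructor
    · rintro ⟨w, hw, rfl⟩
      rw [hf t w]; exact hw
    · intro hv
      refine ⟨σ (-t) v, ?_, ?_⟩
      · rw [hf (-t) v]; exact hv
      · have : σ t (σ (-t) v) = σ 0 v := by
          have := congrFun (?_ : σ t ∘ σ (-t) = σ (t + -t)) v
          · simpa [Function.comp] using this
          · funext w; ext i; fin_cases i <;> simp [σ] <;> ring
        rw [this]
        have : σ (0 : k) = id := by
          funext w; ext i; fin_cases i <;> simp [σ]
        rw [this]; rfl
end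

section
/- Let φ₄ := x₁³x₃ + x₂³x₁ + x₃³x₂ and φ₆ := 5x₁²x₂²x₃² − x₁⁵x₂ − x₂⁵x₃ − x₃⁵x₁ in ℂ[x₁,x₂,x₃] (the Klein PSL₂(𝔽₇)-invariants of degrees 4 and 6), and let g(u,v,w) := w³ + 3w·φ₄(u,v,1) + φ₆(u,v,1) ∈ ℂ[u,v,w]. Then the set S = {(u,v,w) ∈ ℂ³ : g = ∂g/∂u = ∂g/∂v = ∂g/∂w = 0} has exactly 21 elements, and at each point of S the determinant of the 3×3 matrix of second partial derivatives of g is nonzero. (Hence, in the affine chart x₃ = 1, the PSL₂(𝔽₇)-invariant double Veronese cone z² + y³ + 3φ₄·y + φ₆ = 0 has exactly 21 singular points, all of which are ordinary double points; this is the example attaining the sharp bound of 21 nodes for ℚ-factorial nodal double Veronese cones.) -/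
/-!
The ideal of `ℚ[u, v, w]` generated by `g` and its partial derivatives is in shape position: it
contains `u²¹ + 289u¹⁴ - 57u⁷ - 1`, `v - V(u)` and `w - W(u)` for explicit polynomials `V`, `W`,
and the ideal generated by these three contains `g` and its partial derivatives. The polynomial in
`u` is separable, so there are exactly 21 critical zeros; the powers of `u⁷` reflect the symmetry
`(u, v, w) ↦ (ζ⁴u, ζ⁵v, ζ⁶w)`, `ζ⁷ = 1`, of the chart. Modulo the same ideal the Hessian
determinant is `-168 u⁶ (13u¹⁴ + 3760u⁷ + 138)`, which does not vanish: `u ≠ 0`, and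
`13t² + 3760t + 138` is coprime to `t³ + 289t² - 57t - 1`, of which `t = u⁷` is a root.
-/

open MvPolynomial

theorem MvPolynomial.pderiv_ofNat {σ R : Type*} [CommSemiring R] (i : σ) (n : ℕ) [n.AtLeastTwo] :
    pderiv i (no_index (OfNat.ofNat n) : MvPolynomial σ R) = 0 :=
  (pderiv i).map_natCast n

namespace KleinCone

noncomputable def chartPoly : MvPolynomial (Fin 3) ℂ :=
  X 2 ^ 3 + 3 * X 2 * (X 0 ^ 3 + X 0 * X 1 ^ 3 + X 1) + 5 * X 0 ^ 2 * X 1 ^ 2 - X 0 ^ 5 * X 1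
    - X 1 ^ 5 - X 0

def IsCriticalZero (u v w : ℂ) : Prop :=
  w ^ 3 + 3 * w * (u ^ 3 + u * v ^ 3 + v) + 5 * u ^ 2 * v ^ 2 - u ^ 5 * v - v ^ 5 - u = 0 ∧
  3 * w * (3 * u ^ 2 + v ^ 3) + 10 * u * v ^ 2 - 5 * u ^ 4 * v - 1 = 0 ∧
  3 * w * (3 * u * v ^ 2 + 1) + 10 * u ^ 2 * v - u ^ 5 - 5 * v ^ 4 = 0 ∧
  3 * (w ^ 2 + u ^ 3 + u * v ^ 3 + v) = 0

def chartHessian (u v w : ℂ) : Matrix (Fin 3) (Fin 3) ℂ :=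
  !![-20 * u ^ 3 * v + 18 * u * w + 10 * v ^ 2, -5 * u ^ 4 + 20 * u * v + 9 * v ^ 2 * w,
      9 * u ^ 2 + 3 * v ^ 3;
    -5 * u ^ 4 + 20 * u * v + 9 * v ^ 2 * w, 10 * u ^ 2 + 18 * u * v * w - 20 * v ^ 3,
      9 * u * v ^ 2 + 3;
    9 * u ^ 2 + 3 * v ^ 3, 9 * u * v ^ 2 + 3, 6 * w]

theorem isCriticalZero_iff_eval_chartPoly (q : Fin 3 → ℂ) :
    (eval q chartPoly = 0 ∧ ∀ i, eval q (pderiv i chartPoly) = 0) ↔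
      IsCriticalZero (q 0) (q 1) (q 2) := by
  have h0 : eval q (pderiv 0 chartPoly) =
      3 * q 2 * (3 * q 0 ^ 2 + q 1 ^ 3) + 10 * q 0 * q 1 ^ 2 - 5 * q 0 ^ 4 * q 1 - 1 := by
    simp [chartPoly, pderiv_X, pderiv_ofNat]; ring
  have h1 : eval q (pderiv 1 chartPoly) =
      3 * q 2 * (3 * q 0 * q 1 ^ 2 + 1) + 10 * q 0 ^ 2 * q 1 - q 0 ^ 5 - 5 * q 1 ^ 4 := by
    simp [chartPoly, pderiv_X, pderiv_ofNat]; ring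
  have h2 : eval q (pderiv 2 chartPoly) = 3 * (q 2 ^ 2 + q 0 ^ 3 + q 0 * q 1 ^ 3 + q 1) := by
    simp [chartPoly, pderiv_X, pderiv_ofNat]; ring
  have hforall : (∀ i, eval q (pderiv i chartPoly) = 0) ↔
      eval q (pderiv 0 chartPoly) = 0 ∧ eval q (pderiv 1 chartPoly) = 0 ∧
        eval q (pderiv 2 chartPoly) = 0 :=
    ⟨fun h => ⟨h 0, h 1, h 2⟩, fun ⟨e0, e1, e2⟩ i => by fin_cases i; exacts [e0, e1, e2]⟩
  rw [hforall, h0, h1, h2]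
  simp [IsCriticalZero, chartPoly]

theorem hessian_chartPoly (q : Fin 3 → ℂ) :
    Matrix.of (fun i j => eval q (pderiv i (pderiv j chartPoly))) =
      chartHessian (q 0) (q 1) (q 2) := by
  ext i j
  fin_cases i <;> fin_cases j <;> simp [chartHessian, chartPoly, pderiv_X, pderiv_ofNat] <;> ring

noncomputable def nodePoly : Polynomial ℂ :=
  Polynomial.X ^ 21 + 289 * Polynomial.X ^ 14 - 57 * Polynomial.X ^ 7 - 1

theorem eval_nodePoly (u : ℂ) : nodePoly.eval u = u ^ 21 + 289 * u ^ 14 - 57 * u ^ 7 - 1 := by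
  simp [nodePoly]

theorem natDegree_nodePoly : nodePoly.natDegree = 21 := by
  unfold nodePoly; compute_degree!

theorem separable_nodePoly : nodePoly.Separable := by
  have hc : Polynomial.C (941192 : ℂ)⁻¹ * 941192 = 1 := by
    rw [← map_ofNat Polynomial.C, ← Polynomial.C_mul, inv_mul_cancel₀ (by norm_num), Polynomial.C_1]
  have hderiv : Polynomial.derivative nodePoly =
      21 * Polynomial.X ^ 20 + 4046 * Polynomial.X ^ 13 - 399 * Polynomial.X ^ 6 := by
    simp only [nodePoly, Polynomial.derivative_add, Polynomial.derivative_sub,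
      Polynomial.derivative_mul, Polynomial.derivative_X_pow, Polynomial.derivative_ofNat,
      Polynomial.derivative_one, Nat.cast_ofNat, map_ofNat]
    ring
  refine ⟨Polynomial.C (941192 : ℂ)⁻¹ *
      (36540 * Polynomial.X ^ 14 + 7038759 * Polynomial.X ^ 7 - 941192),
    Polynomial.C (941192 : ℂ)⁻¹ *
      (-1740 * Polynomial.X ^ 15 - 502799 * Polynomial.X ^ 8 + 116815 * Polynomial.X), ?_⟩
  rw [hderiv, nodePoly]
  linear_combination hc

theorem mem_rootSet_nodePoly {u : ℂ} : u ∈ nodePoly.rootSet ℂ ↔ nodePoly.eval u = 0 := by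
  rw [Polynomial.mem_rootSet_of_ne (Polynomial.ne_zero_of_natDegree_gt (n := 0) (by
    rw [natDegree_nodePoly]; norm_num)), Polynomial.coe_aeval_eq_eval]

theorem ncard_rootSet_nodePoly : (nodePoly.rootSet ℂ).ncard = 21 := by
  rw [Set.ncard_eq_toFinset_card', Set.toFinset_card,
    Polynomial.card_rootSet_eq_natDegree separable_nodePoly (IsAlgClosed.splits _),
    natDegree_nodePoly]

noncomputable def nodeV (u : ℂ) : ℂ := -(9/98) * u ^ 17 - (1301/49) * u ^ 10 + (213/98) * u ^ 3

noncomputable def nodeW (u : ℂ) : ℂ := (16/49) * u ^ 19 + (4625/49) * u ^ 12 - (626/49) * u ^ 5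

noncomputable def node (u : ℂ) : Fin 3 → ℂ := ![u, nodeV u, nodeW u]

theorem node_injective : Function.Injective node :=
  fun _ _ hab => congrFun hab 0

theorem quadratic_ne_zero_of_cubic_eq_zero {t : ℂ} (ht : t ^ 3 + 289 * t ^ 2 - 57 * t - 1 = 0) :
    13 * t ^ 2 + 3760 * t + 138 ≠ 0 := by
  intro h
  have : (16807 : ℂ) = 0 := by
    linear_combination (39 * t + 11345) * ht - (3 * t ^ 2 + 872 * t - 204) * h
  norm_num at this

namespace IsCriticalZero

variable {u v w : ℂ}

theorem eval_nodePoly_eq_zero (h : IsCriticalZero u v w) : nodePoly.eval u = 0 := by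
  obtain ⟨hg, hu, hv, hw⟩ := h
  rw [eval_nodePoly]
  linear_combination
      (-(48656651430/2527)*u^12*w^3 - (21283728853/2527)*u^11*v^2*w^2 + (13930326/19)*u^10*v^4*w
      + (3548666703/2527)*u^9*v^6 + (26244/7)*u^2*v^13 - (3562683913/2527)*u^12*v*w
      - (9272568323/133)*u^11*v^3 - (3646242/133)*u^4*v^10 - (4218848699/2527)*u^13
      - (119521467/361)*u^6*v^7 - (4040994/19)*u^8*v^4 - 810*u*v^11 + 188082*u^10*v - 7290*u^3*v^8
      - 21870*u^5*v^5 - 21870*u^7*v^2 - 27*v^9 - 243*u^2*v^6 - 729*u^4*v^3 - 729*u^6) * hg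
      + ((8109441905/2527)*u^13*w^3 + (17956179601/5054)*u^12*v^2*w^2
      - (75041181401/5054)*u^11*v^4*w + (9823610285/2527)*u^10*v^6 + (6965163/133)*u^5*v^9*w^2
      - (16694511/266)*u^4*v^11*w + (137745/7)*u^3*v^13 - (44884378230/2527)*u^13*v*w
      + (77175199545/5054)*u^12*v^3 - (1547814/19)*u^8*v^4*w^3 - (54296899/361)*u^7*v^6*w^2
      - (377642154/2527)*u^6*v^8*w + (17188999/133)*u^5*v^10 + (4218118396/2527)*u^14
      - 977184*u^9*v^3*w^2 - (4943244123/5054)*u^8*v^5*w - (1479838887/5054)*u^7*v^7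
      + 2484*u^2*v^10*w^2 - (12231/14)*u*v^12*w + (675/7)*v^14 - (17993523801/5054)*u^11*w^2
      + 793881*u^10*v^2*w + (6878340/19)*u^9*v^4 + 19143*u^4*v^7*w^2 - 16998*u^3*v^9*w
      + 1188*u^2*v^11 - 191283*u^11*v + 21546*u^6*v^4*w^2 - 50922*u^5*v^6*w + 19234*u^4*v^8
      - 20898*u^8*v*w^2 - 85635*u^7*v^3*w + 24744*u^6*v^5 + 270*u*v^8*w^2 - 81*v^10*w + 4887*u^9*w
      + 26110*u^8*v^2 + 1620*u^3*v^5*w^2 + 171*u^2*v^7*w + 27*u*v^9 + 2430*u^5*v^2*w^2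
      + 483*u^4*v^4*w + 1243*u^3*v^6 - 2277*u^6*v*w + 629*u^5*v^3 + 9*v^6*w^2 + 786*u^7
      + 54*u^2*v^3*w^2 + 60*u*v^5*w + 81*u^4*w^2 + 180*u^3*v^2*w + 100*u^2*v^4 - 5*u^4*v + 3*v^3*w
      + 9*u^2*w + 10*u*v^2 + 1) * hu + (-u^16 + (8109441905/2527)*u^12*v*w^3
      + (1443211131/5054)*u^11*v^3*w^2 + (9654357261/2527)*u^10*v^5*w - (27682115/2527)*u^9*v^7
      - (2321721/133)*u^4*v^10*w^2 + (157113/14)*u^3*v^12*w - (4617/14)*u^2*v^14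
      + (24328325715/2527)*u^13*w^2 + (14825339839/722)*u^12*v^2*w + (61384250306/2527)*u^11*v^4
      + (11330514/361)*u^6*v^7*w^2 + (10811322/133)*u^5*v^9*w + (12853629/266)*u^4*v^11
      + (17265267665/5054)*u^13*v + (1912625571/5054)*u^7*v^6*w + (1005769004/2527)*u^6*v^8
      + (405/7)*v^13*w + (587822625/5054)*u^8*v^5 + (11043/14)*u*v^12
      - (6071937961/5054)*u^11*w) * hv + ((8109441905/2527)*u^15*w^2 - (50313103681/2166)*u^14*v^2*w
      + (52639036013/7581)*u^13*v^4 + (1547814/19)*u^8*v^7*w^2 - (13414568/133)*u^7*v^9*w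
      + (475107/14)*u^6*v^11 + (51008804767/15162)*u^15*v + (16218883810/2527)*u^12*w^4
      + (21283728853/7581)*u^11*v^2*w^3 + (3112887486/2527)*u^9*v^6*w + (4838771470/7581)*u^8*v^8
      - (26136/7)*u^2*v^13*w + (9801/14)*u*v^15 + (76547661058/7581)*u^12*v*w^2
      + (265795820560/7581)*u^11*v^3*w + (4447058817/5054)*u^10*v^5 + (816/7)*u^3*v^12
      - (56684961733/15162)*u^13*w - (89906172443/5054)*u^12*v^2 - (3361653/133)*u^5*v^9
      - (3931394777/15162)*u^7*v^6 + (162/7)*v^13) * hw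

theorem eq_nodeV (h : IsCriticalZero u v w) : v = nodeV u := by
  obtain ⟨hg, hu, hv, hw⟩ := h
  unfold nodeV
  linear_combination
      (-(2020723332/123823)*u^8*w^3 + (3128211193/123823)*u^7*v^2*w^2 - (5832/19)*u^6*v^4*w
      - (1583229507/247646)*u^5*v^6 + (4845257584/123823)*u^8*v*w - (813367907/13034)*u^7*v^3
      + (675/133)*v^10 + (329970548/123823)*u^9 + (392850/2527)*u^2*v^7 + (14499/19)*u^4*v^4
      + 729*u^6*v) * hg + ((336787222/123823)*u^9*w^3 - (594692915/247646)*u^8*v^2*w^2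
      - (1987762010/123823)*u^7*v^4*w + (3540535213/495292)*u^6*v^6 - (2916/133)*u*v^9*w^2
      + (1620/133)*v^11*w - (12012015933/495292)*u^9*v*w + (231494560/17689)*u^8*v^3
      + (648/19)*u^4*v^4*w^3 - (106299/2527)*u^3*v^6*w^2 - (620667/5054)*u^2*v^8*w
      + (15795/266)*u*v^10 - (333258175/123823)*u^10 - (113319/49)*u^5*v^3*w^2
      - (12193791/247646)*u^4*v^5*w - (76611109/495292)*u^3*v^7 - (3020216277/495292)*u^7*w^2
      + (130743/49)*u^6*v^2*w - (415001/931)*u^5*v^4 - 9*v^7*w^2 - (72507/98)*u^7*v - 54*u^2*v^4*w^2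
      - 60*u*v^6*w - 81*u^4*v*w^2 - (17001/98)*u^3*v^3*w - 100*u^2*v^5 + (1917/98)*u^5*w
      + (1310/49)*u^4*v^2 - 3*v^4*w - 9*u^2*v*w - 10*u*v^3 + (213/98)*u^3 - v) * hu + (-(9/98)*u^12
      + (336787222/123823)*u^8*v*w^3 - (1262234479/247646)*u^7*v^3*w^2
      + (1342260303/247646)*u^6*v^5*w + (580337187/495292)*u^5*v^7 + (972/133)*v^10*w^2
      + (1010361666/123823)*u^9*w^2 + (3455891785/495292)*u^8*v^2*w + (5640135889/247646)*u^7*v^4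
      + (73737/2527)*u^2*v^7*w^2 + (16281/266)*u*v^9*w - (135/133)*v^11 + (752393623/123823)*u^9*v
      + (92056809/495292)*u^3*v^6*w + (523611/5054)*u^2*v^8 + (16595357/247646)*u^4*v^5
      - (1035804313/495292)*u^7*w) * hv + ((336787222/123823)*u^11*w^2
      - (18611374085/742938)*u^10*v^2*w + (7558277119/742938)*u^9*v^4 - (648/19)*u^4*v^7*w^2
      + (2700/133)*u^3*v^9*w - (583812989/371469)*u^11*v + (673574444/123823)*u^8*w^4
      - (3128211193/371469)*u^7*v^2*w^3 + (1103555861/247646)*u^5*v^6*w - (38570223/495292)*u^4*v^8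
      - (1814172586/371469)*u^8*v*w^2 + (32825202695/1485876)*u^7*v^3*w - (1840242/123823)*u^6*v^5
      + (7001979869/1485876)*u^9*w - (11250380473/742938)*u^8*v^2 + (5715/266)*u*v^9
      + (165226497/495292)*u^3*v^6) * hw

theorem eq_nodeW (h : IsCriticalZero u v w) : w = nodeW u := by
  obtain ⟨hg, hu, hv, hw⟩ := h
  unfold nodeW
  linear_combination
      ((769724296269/495292)*u^10*w^3 + (857752546859/495292)*u^9*v^2*w^2 + (273132/19)*u^8*v^4*w
      + (74868346125/123823)*u^7*v^6 + (1350/7)*v^13 + (458253164205/247646)*u^10*v*w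
      + (150018943873/26068)*u^9*v^3 + (107838/133)*u^2*v^10 + (137765081127/495292)*u^11
      + (7215786/2527)*u^4*v^7 - (77544/19)*u^6*v^4 - 20493*u^8*v + 180*u*v^8 + 1080*u^3*v^5
      + 1620*u^5*v^2 + 9*v^6 + 54*u^2*v^3 + 81*u^4) * hg + (-(256574765423/990584)*u^11*w^3
      - (456778999315/990584)*u^10*v^2*w^2 + (531145929681/495292)*u^9*v^4*w
      - (132151348327/247646)*u^8*v^6 + (136566/133)*u^3*v^9*w^2 + (70443/38)*u^2*v^11*w
      - (17901/14)*u*v^13 + (1026924807605/990584)*u^11*v*w - (212141827711/141512)*u^10*v^3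
      - (30348/19)*u^6*v^4*w^3 - (15245919/2527)*u^5*v^6*w^2 + (8774035/722)*u^4*v^8*w
      - (543909/266)*u^3*v^10 - (137718331627/495292)*u^12 + (4170690/49)*u^7*v^3*w^2
      - (4480988601/247646)*u^6*v^5*w - (4380382383/247646)*u^5*v^7 + 81*v^10*w^2
      + (89056718529/495292)*u^9*w^2 - (4078936/49)*u^8*v^2*w - (8500298/931)*u^7*v^4
      - 171*u^2*v^7*w^2 + 810*u*v^9*w - 9*v^11 + (1023163/49)*u^9*v - 483*u^4*v^4*w^2
      + 3806*u^3*v^6*w - 279*u^2*v^8 + 2277*u^6*v*w^2 + (344356/49)*u^5*v^3*w - 1431*u^4*v^5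
      - (29448/49)*u^7*w - (105485/49)*u^6*v^2 - 60*u*v^5*w^2 + 27*v^7*w - 180*u^3*v^2*w^2
      + 62*u^2*v^4*w - 9*u*v^6 + 248*u^4*v*w - 54*u^3*v^3 - (4595/49)*u^5 - 3*v^3*w^2 - 9*u^2*w^2
      - 10*u*v^2*w - w) * hu + ((16/49)*u^14 - (256574765423/990584)*u^10*v*w^3
      - (50333598353/247646)*u^9*v^3*w^2 - (70981872043/247646)*u^8*v^5*w
      - (10946925666/123823)*u^7*v^7 - (45522/133)*u^2*v^10*w^2 - (11313/14)*u*v^12*w - (270/7)*v^14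
      - (769724296269/990584)*u^11*w^2 - (1925861965151/990584)*u^10*v^2*w
      - (824527183233/495292)*u^9*v^4 + (111630/2527)*u^4*v^7*w^2 - (1570041/266)*u^3*v^9*w
      - (735993/266)*u^2*v^11 - (139984860453/990584)*u^11*v - (4333939069/247646)*u^5*v^6*w
      - (52755375/5054)*u^4*v^8 - (5330993763/247646)*u^6*v^5 + (30578553995/495292)*u^9*w) * hv
      + (-(256574765423/990584)*u^13*w^2 + (2520885909295/1485876)*u^12*v^2*w
      - (532913900717/742938)*u^11*v^4 + (30348/19)*u^6*v^7*w^2 + (375093/133)*u^5*v^9*w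
      - (29115/14)*u^4*v^11 - (413880416343/990584)*u^13*v - (256574765423/495292)*u^10*w^4
      - (857752546859/1485876)*u^9*v^2*w^3 - (32595039192/123823)*u^7*v^6*w
      + (12932056591/247646)*u^6*v^8 - (1017/7)*v^13*w - (1380728515209/990584)*u^10*v*w^2
      - (2455224801727/742938)*u^9*v^3*w + (15509099336/123823)*u^8*v^5 - (3807/14)*u*v^12
      + (856747810073/1485876)*u^11*w + (1367108984319/990584)*u^10*v^2 + (153929/266)*u^3*v^9
      - (358146077/247646)*u^5*v^6) * hw

theorem det_chartHessian (h : IsCriticalZero u v w) :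
    (chartHessian u v w).det = -168 * u ^ 6 * (13 * u ^ 14 + 3760 * u ^ 7 + 138) := by
  obtain ⟨hg, hu, hv, hw⟩ := h
  rw [Matrix.det_fin_three]
  simp only [chartHessian, Matrix.of_apply, Matrix.cons_val', Matrix.cons_val_zero,
    Matrix.cons_val_one, Matrix.cons_val_two, Matrix.empty_val', Matrix.cons_val_fin_one,
    Matrix.head_cons, Matrix.tail_cons, Matrix.head_fin_const]
  linear_combination
      (-(462747986700/361)*u^11*w^3 - (982591388558/361)*u^10*v^2*w^2 - (235652760/19)*u^9*v^4*w
      - (151468337928/361)*u^8*v^6 - 247860*u*v^13 - (1169377704446/361)*u^11*v*w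
      - (88951890784/19)*u^10*v^3 - (23138136/19)*u^3*v^10 - (142890090238/361)*u^12
      - (1150840062/361)*u^5*v^7 - (122385264/19)*u^7*v^4 + 1350*v^11 + 2654532*u^9*v
      - 198612*u^2*v^8 - 908982*u^4*v^5 - 902988*u^6*v^2 - 11178*u*v^6 - 34668*u^3*v^3 - 3402*u^5
      - 486*v^4 + 1944*u^2*v) * hg + ((77124664450/361)*u^12*w^3 + (215122449493/361)*u^11*v^2*w^2
      - (267595462100/361)*u^10*v^4*w + (128973198495/361)*u^9*v^6 - (16832340/19)*u^4*v^9*w^2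
      - (43168614/19)*u^3*v^11*w + 1454013*u^2*v^13 - (167636324919/361)*u^12*v*w
      + (464238458908/361)*u^11*v^3 + (26183640/19)*u^7*v^4*w^3 + (3454600984/361)*u^6*v^6*w^2
      - (3943143792/361)*u^5*v^8*w + (7230834/19)*u^4*v^10 + (142662053758/361)*u^13
      - 32771394*u^8*v^3*w^2 + (7634438028/361)*u^7*v^5*w + (5930932318/361)*u^6*v^7
      - 100854*u*v^10*w^2 + 1485*v^12*w - (8760272493/361)*u^10*w^2 + 10058298*u^9*v^2*w
      + (172264596/19)*u^8*v^4 + 413190*u^3*v^7*w^2 - 884184*u^2*v^9*w + 12888*u*v^11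
      - 2557620*u^10*v + 967140*u^5*v^4*w^2 - 2564094*u^4*v^6*w + 389430*u^3*v^8 - 294948*u^7*v*w^2
      - 3198348*u^6*v^3*w + 796230*u^5*v^5 - 450*v^8*w^2 - 178374*u^8*w + 713844*u^7*v^2
      + 67554*u^2*v^5*w^2 - 32118*u*v^7*w + 306*v^9 + 100332*u^4*v^2*w^2 + 8904*u^3*v^4*w
      + 21204*u^2*v^6 - 32562*u^5*v*w + 6588*u^4*v^3 - 18702*u^6 + 3726*u*v^3*w^2 - 150*v^5*w
      + 378*u^3*w^2 + 10548*u^2*v^2*w + 1566*u*v^4 - 3204*u^3*v + 162*u*w + 90*v^2) * hu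
      + (-2184*u^15 + (77124664450/361)*u^11*v*w^3 + (138353134443/361)*u^10*v^3*w^2
      + (60416148969/361)*u^9*v^5*w + (22231795996/361)*u^8*v^7 + (5610780/19)*u^3*v^10*w^2
      + 921402*u^2*v^12*w + 48681*u*v^14 + (231373993350/361)*u^12*w^2
      + (725513669254/361)*u^11*v^2*w + (448972086817/361)*u^10*v^4 - (413008956/361)*u^5*v^7*w^2
      + (96746694/19)*u^4*v^9*w + (60361110/19)*u^3*v^11 - (5982998994/361)*u^12*v
      + (2875013028/361)*u^6*v^6*w + (2593243962/361)*u^5*v^8 + (8258275088/361)*u^7*v^5 - 1161*v^12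
      - (2726911789/361)*u^10*w) * hv + ((77124664450/361)*u^14*w^2
      - (1282038563971/1083)*u^13*v^2*w + (515629450543/1083)*u^12*v^4 - (26183640/19)*u^7*v^7*w^2
      - (66112144/19)*u^6*v^9*w + 2356962*u^5*v^11 + (564445063798/1083)*u^14*v
      + (154249328900/361)*u^11*w^4 + (982591388558/1083)*u^10*v^2*w^3 + (50297819058/361)*u^8*v^6*w
      - (41467782058/1083)*u^7*v^8 + 183474*u*v^13*w - 1485*v^15 + (1863499684496/1083)*u^11*v*w^2
      + (3372964375268/1083)*u^10*v^3*w - (42456299511/361)*u^9*v^5 + 294507*u^2*v^12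
      - (858012759625/1083)*u^12*w - (406814459432/361)*u^11*v^2 - (29424150/19)*u^4*v^9
      + (3254673760/1083)*u^6*v^6) * hw

theorem det_chartHessian_ne_zero (h : IsCriticalZero u v w) :
    (chartHessian u v w).det ≠ 0 := by
  have hp := h.eval_nodePoly_eq_zero
  rw [eval_nodePoly] at hp
  have hu : u ≠ 0 := by rintro rfl; norm_num at hp
  have ht := quadratic_ne_zero_of_cubic_eq_zero (t := u ^ 7) (by linear_combination hp)
  rw [h.det_chartHessian]
  refine mul_ne_zero (mul_ne_zero (by norm_num) (pow_ne_zero _ hu)) ?_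
  convert ht using 1
  ring

end IsCriticalZero

theorem isCriticalZero_node {u : ℂ} (hp : nodePoly.eval u = 0) :
    IsCriticalZero u (nodeV u) (nodeW u) := by
  rw [eval_nodePoly] at hp
  unfold nodeV nodeW
  refine ⟨?_, ?_, ?_, ?_⟩
  · linear_combination
      ((59049/9039207968)*u^64 + (9756207/1291315424)*u^57 + (604264455/184473632)*u^50
      + (814333005657/1291315424)*u^43 + (58582369659965/1291315424)*u^36
      - (36116428579867/1291315424)*u^29 + (9791686597195/1291315424)*u^22
      - (9137673836251/9039207968)*u^15 + (414717/9604)*u^8 + u) * hp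
  · linear_combination
      (-(4374/5764801)*u^49 - (30351915/46118408)*u^42 - (8773849449/46118408)*u^35
      - (844704436845/46118408)*u^28 + (155299232283/46118408)*u^21 - (8697642633/23059204)*u^14
      + (51879/2401)*u^7 + 1) * hp
  · linear_combination
      (-(32805/92236816)*u^47 - (28456515/92236816)*u^40 - (4112313543/46118408)*u^33
      - (395507483811/46118408)*u^26 + (294265179967/92236816)*u^19 - (33726233395/92236816)*u^12
      + (862/49)*u^5) * hp
  · linear_combination
      (-(2187/941192)*u^31 - (1264815/941192)*u^24 - (182539515/941192)*u^17
      + (95882181/941192)*u^10 - (933/98)*u^3) * hp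

theorem isCriticalZero_iff {u v w : ℂ} :
    IsCriticalZero u v w ↔ nodePoly.eval u = 0 ∧ v = nodeV u ∧ w = nodeW u := by
  refine ⟨fun h => ⟨h.eval_nodePoly_eq_zero, h.eq_nodeV, h.eq_nodeW⟩, ?_⟩
  rintro ⟨hp, rfl, rfl⟩
  exact isCriticalZero_node hp

theorem mem_image_node_iff (q : Fin 3 → ℂ) :
    q ∈ node '' nodePoly.rootSet ℂ ↔ IsCriticalZero (q 0) (q 1) (q 2) := by
  rw [isCriticalZero_iff]
  constructor
  · rintro ⟨u, hu, rfl⟩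
    exact ⟨mem_rootSet_nodePoly.1 hu, rfl, rfl⟩
  · rintro ⟨hp, hv, hw⟩
    refine ⟨q 0, mem_rootSet_nodePoly.2 hp, ?_⟩
    ext i
    fin_cases i <;> simp [node, hv, hw]

theorem setOf_isCriticalZero_chartPoly :
    {q | eval q chartPoly = 0 ∧ ∀ i, eval q (pderiv i chartPoly) = 0} =
      node '' nodePoly.rootSet ℂ := by
  ext q
  exact (isCriticalZero_iff_eval_chartPoly q).trans (mem_image_node_iff q).symm

end KleinCone

/-- In the affine chart `x₃ = 1`, the `PSL₂(𝔽₇)`-invariant double Veronese cone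
`z² + y³ + 3φ₄·y + φ₆ = 0` has exactly `21` singular points, all of them nodes:
the polynomial `g = w³ + 3w·φ₄(u,v,1) + φ₆(u,v,1)` (variables u = X 0, v = X 1, w = X 2)
has exactly `21` critical zeros, at each of which its Hessian is nondegenerate. -/
theorem stmt_8 :
    let φ₄ : MvPolynomial (Fin 3) ℂ := X 0 ^ 3 * X 2 + X 1 ^ 3 * X 0 + X 2 ^ 3 * X 1
    let φ₆ : MvPolynomial (Fin 3) ℂ :=
      5 * X 0 ^ 2 * X 1 ^ 2 * X 2 ^ 2 - X 0 ^ 5 * X 1 - X 1 ^ 5 * X 2 - X 2 ^ 5 * X 0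
    let g : MvPolynomial (Fin 3) ℂ :=
      X 2 ^ 3 + 3 * X 2 * aeval ![X 0, X 1, 1] φ₄ + aeval ![X 0, X 1, 1] φ₆
    let S : Set (Fin 3 → ℂ) :=
      {p | eval p g = 0 ∧ ∀ i : Fin 3, eval p (pderiv i g) = 0}
    S.Finite ∧ S.ncard = 21 ∧
    ∀ p ∈ S, (Matrix.of fun i j : Fin 3 => eval p (pderiv i (pderiv j g))).det ≠ 0 := by
  intro φ₄ φ₆ g S
  have hg : g = KleinCone.chartPoly := by
    simp [g, φ₄, φ₆, KleinCone.chartPoly, map_ofNat]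
    ring
  have hS : S = KleinCone.node '' KleinCone.nodePoly.rootSet ℂ := by
    rw [← KleinCone.setOf_isCriticalZero_chartPoly, ← hg]
  refine ⟨hS ▸ (KleinCone.nodePoly.rootSet_finite ℂ).image _, ?_, ?_⟩
  · rw [hS, Set.ncard_image_of_injective _ KleinCone.node_injective,
      KleinCone.ncard_rootSet_nodePoly]
  · rw [hS, hg]
    rintro q hq
    rw [KleinCone.hessian_chartPoly]
    exact ((KleinCone.mem_image_node_iff q).1 hq).det_chartHessian_ne_zero
end

section
/- Let m and n be coprime positive integers with 2m ≤ n. Suppose there exist nonnegative integers k₂, k₃, k₂', k₃' with (k₂,k₃) ≠ (k₂',k₃'), k₂ + k₃ ≤ 6, k₂' + k₃' ≤ 6, and m·k₂ + n·k₃ = m·k₂' + n·k₃'. Then n ≤ 6 and m ≤ 2. -/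
private lemma stmt_10_aux (m n : ℕ) (hm : 0 < m) (hn : 0 < n) (hcop : Nat.Coprime m n)
    (hle : 2 * m ≤ n) (k₂ k₃ k₂' k₃' : ℕ) (h1 : k₂ + k₃ ≤ 6) (h2 : k₂' + k₃' ≤ 6)
    (hlt : k₃' < k₃) (heq : m * k₂ + n * k₃ = m * k₂' + n * k₃') :
    n ≤ 6 ∧ m ≤ 2 := by
  have h3 : n * k₃' < n * k₃ := by
    exact Nat.mul_lt_mul_of_le_of_lt (le_refl n) hlt hn
  have hk2 : k₂ < k₂' := by
    have : m * k₂ < m * k₂' := by omega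
    exact Nat.lt_of_mul_lt_mul_left this
  have key : m * (k₂' - k₂) = n * (k₃ - k₃') := by
    zify [le_of_lt hk2, le_of_lt hlt]
    push_cast at heq
    linarith
  -- n divides k₂' - k₂
  have hd1 : n ∣ m * (k₂' - k₂) := ⟨k₃ - k₃', key⟩
  have hdvdn : n ∣ (k₂' - k₂) := (Nat.Coprime.dvd_of_dvd_mul_left hcop.symm hd1)
  have hn6 : n ≤ k₂' - k₂ := Nat.le_of_dvd (by omega) hdvdn
  -- m divides k₃ - k₃'
  have hd2 : m ∣ n * (k₃ - k₃') := ⟨k₂' - k₂, key.symm⟩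
  have hdvdm : m ∣ (k₃ - k₃') := (Nat.Coprime.dvd_of_dvd_mul_left hcop hd2)
  have hmb : m ≤ k₃ - k₃' := Nat.le_of_dvd (by omega) hdvdm
  have hnle6 : n ≤ 6 := by omega
  refine ⟨hnle6, ?_⟩
  have hm3 : m ≤ 3 := by omega
  by_contra hm2
  have hm' : m = 3 := by omega
  subst hm'
  have hn' : n = 6 := by omega
  subst hn'
  simp [Nat.Coprime] at hcop

/-- Key arithmetic step in the classification of `𝔾ₘ`-actions on double Veronese cones:
if `m, n` are coprime positive integers with `2m ≤ n` and two distinct exponent pairs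
`(k₂,k₃) ≠ (k₂',k₃')` with `k₂+k₃ ≤ 6`, `k₂'+k₃' ≤ 6` have the same weight
`m·k₂ + n·k₃ = m·k₂' + n·k₃'`, then `n ≤ 6` and `m ≤ 2`. -/
theorem stmt_10 (m n : ℕ) (hm : 0 < m) (hn : 0 < n) (hcop : Nat.Coprime m n)
    (hle : 2 * m ≤ n)
    (h : ∃ k₂ k₃ k₂' k₃' : ℕ, (k₂, k₃) ≠ (k₂', k₃') ∧ k₂ + k₃ ≤ 6 ∧ k₂' + k₃' ≤ 6 ∧
      m * k₂ + n * k₃ = m * k₂' + n * k₃') :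
    n ≤ 6 ∧ m ≤ 2 := by
  obtain ⟨k₂, k₃, k₂', k₃', hne, h1, h2, heq⟩ := h
  rcases lt_trichotomy k₃ k₃' with hlt | heqk | hlt
  · exact stmt_10_aux m n hm hn hcop hle k₂' k₃' k₂ k₃ h2 h1 hlt heq.symm
  · subst heqk
    have h' : m * k₂ = m * k₂' := by omega
    have : k₂ = k₂' := Nat.eq_of_mul_eq_mul_left hm h'
    simp [this] at hne
  · exact stmt_10_aux m n hm hn hcop hle k₂ k₃ k₂' k₃' h1 h2 hlt heq
end

section
/- Let k be a field of characteristic 0 and let f := z² + y³ + x₁⁶ + x₂⁵x₃ + x₃⁶ ∈ k[x₁,x₂,x₃,y,z]. Then the only common zero in k⁵ of f and its five partial derivatives is the origin; consequently the double Veronese cone {f = 0} ⊂ ℙ(1,1,1,2,3) is smooth. -/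
open MvPolynomial

/-- The affine cone of the double Veronese cone `z² + y³ + x₁⁶ + x₂⁵x₃ + x₃⁶ = 0` is
smooth away from the origin: the only common zero of `f` and its five partial derivatives
is the origin (variables: x₁,x₂,x₃ = X 0, X 1, X 2; y = X 3; z = X 4). -/
theorem stmt_11 {k : Type*} [Field k] [CharZero k] :
    let f : MvPolynomial (Fin 5) k :=
      X 4 ^ 2 + X 3 ^ 3 + X 0 ^ 6 + X 1 ^ 5 * X 2 + X 2 ^ 6
    ∀ P : Fin 5 → k,
      (eval P f = 0 ∧ ∀ i : Fin 5, eval P (pderiv i f) = 0) → P = 0 := by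
  intro f P ⟨_, hd⟩
  have h0 := hd 0
  have h1 := hd 1
  have h2 := hd 2
  have h3 := hd 3
  have h4 := hd 4
  simp [f, pderiv_mul, pderiv_pow, pderiv_X, Pi.single_apply, Fin.ext_iff,
    Fin.val_zero, Fin.val_one, show ((2:Fin 5):ℕ) = 2 from rfl,
    show ((3:Fin 5):ℕ) = 3 from rfl, show ((4:Fin 5):ℕ) = 4 from rfl,
    show ((0:Fin 5):ℕ) = 0 from rfl, show ((1:Fin 5):ℕ) = 1 from rfl]
    at h0 h1 h2 h3 h4
  -- now h0 : P 0 = 0, h1 : P 2 = 0 ∨ P 1 = 0, h2 : P 1 ^ 5 + 6 * P 2 ^ 5 = 0,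
  -- h3 : P 3 = 0, h4 : P 4 = 0
  have h12 : P 1 = 0 ∧ P 2 = 0 := by
    rcases h1 with h | h
    · have : P 1 ^ 5 = 0 := by simpa [h] using h2
      exact ⟨pow_eq_zero_iff (n := 5) (by norm_num) |>.mp this, h⟩
    · have h6 : (6:k) * P 2 ^ 5 = 0 := by simpa [h] using h2
      have : P 2 ^ 5 = 0 := by
        rcases mul_eq_zero.mp h6 with h' | h'
        · exact absurd h' (by norm_num)
        · exact h'
      exact ⟨h, pow_eq_zero_iff (n := 5) (by norm_num) |>.mp this⟩
  funext i
  fin_cases i <;> simp_all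
end
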